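/- Let f : ℝ² → ℝ² be continuous and let N₀, N₁ be disjoint h-sets such that all four horizontal covering relations hold: N₀ ⟹ N₀, N₀ ⟹ N₁, N₁ ⟹ N₀, N₁ ⟹ N₁. Then for every n ≥ 1 and every sequence (i₀,…,i_{n-1}) ∈ {0,1}^n there exists x ∈ int N_{i₀} with f^n(x) = x and f^j(x) ∈ int N_{i_j} for all j. -/

import Mathlib

/-- The h-set `[a,b] × [-r,r] ⊂ ℝ²`. -/
def HSet (a b r : ℝ) : Set (ℝ × ℝ) := Set.Icc a b ×ˢ Set.Icc (-r) r

/-- Left edge `{a} × [-r,r]`. -/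
def LeftEdge (a r : ℝ) : Set (ℝ × ℝ) := ({a} : Set ℝ) ×ˢ Set.Icc (-r) r

/-- Right edge `{b} × [-r,r]`. -/
def RightEdge (b r : ℝ) : Set (ℝ × ℝ) := ({b} : Set ℝ) ×ˢ Set.Icc (-r) r

/-- Horizontal boundary `[a,b] × {-r,r}`. -/
def HorizBdry (a b r : ℝ) : Set (ℝ × ℝ) := Set.Icc a b ×ˢ ({-r, r} : Set ℝ)

/-- Left side `(-∞,a) × ℝ`. -/
def LeftSide (a : ℝ) : Set (ℝ × ℝ) := Set.Iio a ×ˢ (Set.univ : Set ℝ)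

/-- Right side `(b,∞) × ℝ`. -/
def RightSide (b : ℝ) : Set (ℝ × ℝ) := Set.Ioi b ×ˢ (Set.univ : Set ℝ)

/-- `N₀ = [a₀,b₀] × [-r,r]` `g`-covers `N₁ = [a₁,b₁] × [-r,r]` horizontally. -/
def CoversH (g : ℝ × ℝ → ℝ × ℝ) (a₀ b₀ a₁ b₁ r : ℝ) : Prop :=
  g '' HSet a₀ b₀ r ⊆
      (LeftSide a₁ ∪ HSet a₁ b₁ r ∪ RightSide b₁) \ HorizBdry a₁ b₁ r ∧
  ((g '' LeftEdge a₀ r ⊆ LeftSide a₁ ∧ g '' RightEdge b₀ r ⊆ RightSide b₁) ∨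
   (g '' LeftEdge a₀ r ⊆ RightSide b₁ ∧ g '' RightEdge b₀ r ⊆ LeftSide a₁))


/-!
Clamping back into the next h-set after every step turns the prescribed itinerary into a
continuous map `Q` of the whole plane, and the covering relations make `f ∘ Q` send the two
vertical edges of the first h-set to opposite sides of it. The Poincaré–Miranda theorem, proved
by following a continuous angle of the displacement field around the rectangle, then yields a
point `p` with `f (Q p) = p`. A point on a vertical edge stays on vertical edges under the clamped
iteration and finally leaves the h-set sideways, so the orbit of `p` never meets a vertical edge;
hence no clamping ever happens, `p` is a genuine periodic point, and the covering relations keep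
its orbit off the horizontal boundaries.
-/

open Set Real

theorem IsPreconnected.lt_of_sin_pos {X : Type*} [TopologicalSpace X] {S : Set X}
    (hS : IsPreconnected S) {φ : X → ℝ} (hφ : ContinuousOn φ S)
    (hsin : ∀ z ∈ S, 0 < sin (φ z)) {p q : X} (hp : p ∈ S) (hq : q ∈ S)
    (hcp : cos (φ p) < 0) (hcq : 0 < cos (φ q)) : φ q < φ p := by
  by_contra! hle
  have hsub : Icc (φ p) (φ q) ⊆ φ '' S :=
    (hS.image φ hφ).Icc_subset (mem_image_of_mem φ hp) (mem_image_of_mem φ hq)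
  have hanti : AntitoneOn cos (Icc (φ p) (φ q)) := by
    refine antitoneOn_of_deriv_nonpos (convex_Icc _ _) continuous_cos.continuousOn
      differentiable_cos.differentiableOn fun x hx => ?_
    obtain ⟨z, hz, rfl⟩ := hsub (interior_subset hx)
    rw [Real.deriv_cos]
    linarith [hsin z hz]
  linarith [hanti (left_mem_Icc.2 hle) (right_mem_Icc.2 hle) hle]

/-- Following the angle counterclockwise around the rectangle, it strictly decreases along each
side, so it cannot return to its starting value. -/
theorem false_of_angle_boundary_signs {α β γ δ : ℝ} (hαβ : α ≤ β) (hγδ : γ ≤ δ)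
    {θ : ℝ × ℝ → ℝ} (hθ : ContinuousOn θ (Icc α β ×ˢ Icc γ δ))
    (hL : ∀ y ∈ Icc γ δ, cos (θ (α, y)) < 0) (hR : ∀ y ∈ Icc γ δ, 0 < cos (θ (β, y)))
    (hB : ∀ x ∈ Icc α β, 0 < sin (θ (x, γ))) (hT : ∀ x ∈ Icc α β, sin (θ (x, δ)) < 0) :
    False := by
  have hα := left_mem_Icc.2 hαβ
  have hβ := right_mem_Icc.2 hαβ
  have hγ := left_mem_Icc.2 hγδ
  have hδ := right_mem_Icc.2 hγδ
  have horiz : ∀ y ∈ Icc γ δ, ∀ c : ℝ, ContinuousOn (fun x => θ (x, y) + c) (Icc α β) :=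
    fun y hy c => (hθ.comp (continuousOn_id.prodMk continuousOn_const)
      fun x hx => mk_mem_prod hx hy).add continuousOn_const
  have vert : ∀ x ∈ Icc α β, ∀ c : ℝ, ContinuousOn (fun y => θ (x, y) + c) (Icc γ δ) :=
    fun x hx c => (hθ.comp (continuousOn_const.prodMk continuousOn_id)
      fun y hy => mk_mem_prod hx hy).add continuousOn_const
  have bottom : θ (β, γ) + 0 < θ (α, γ) + 0 :=
    isPreconnected_Icc.lt_of_sin_pos (horiz γ hγ 0) (by simpa using hB) hα hβ
      (by simpa using hL γ hγ) (by simpa using hR γ hγ)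
  have right : θ (β, δ) + π / 2 < θ (β, γ) + π / 2 :=
    isPreconnected_Icc.lt_of_sin_pos (vert β hβ _) (by simpa [sin_add_pi_div_two] using hR)
      hγ hδ (by simpa [cos_add_pi_div_two] using hB β hβ)
      (by simpa [cos_add_pi_div_two] using hT β hβ)
  have top : θ (α, δ) + π < θ (β, δ) + π :=
    isPreconnected_Icc.lt_of_sin_pos (horiz δ hδ _) (by simpa [sin_add_pi] using hT)
      hβ hα (by simpa [cos_add_pi] using hR δ hδ) (by simpa [cos_add_pi] using hL δ hδ)
  have left : θ (α, γ) + -(π / 2) < θ (α, δ) + -(π / 2) :=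
    isPreconnected_Icc.lt_of_sin_pos (vert α hα _)
      (by simpa [← sub_eq_add_neg, sin_sub_pi_div_two] using hL)
      hδ hγ (by simpa [← sub_eq_add_neg, cos_sub_pi_div_two] using hT α hα)
      (by simpa [← sub_eq_add_neg, cos_sub_pi_div_two] using hB α hα)
  linarith

theorem exists_continuous_exp_eq {X : Type*} [TopologicalSpace X] [SimplyConnectedSpace X]
    [LocallyPathConnectedSpace X] {g : X → ℂ} (hg : Continuous g) (hg0 : ∀ x, g x ≠ 0) :
    ∃ L : X → ℂ, Continuous L ∧ ∀ x, Complex.exp (L x) = g x := by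
  obtain ⟨x₀⟩ := (inferInstance : Nonempty X)
  obtain ⟨L, ⟨-, hL⟩, -⟩ := Complex.isCoveringMapOn_exp.existsUnique_continuousMap_lifts
    ⟨g, hg⟩ (Complex.exp_log (hg0 x₀)) hg0
  exact ⟨L, L.continuous, congrFun hL⟩

def rectRetract (α β γ δ : ℝ) (p : ℝ × ℝ) : ℝ × ℝ :=
  (max α (min β p.1), max γ (min δ p.2))

theorem continuous_rectRetract (α β γ δ : ℝ) : Continuous (rectRetract α β γ δ) := by
  unfold rectRetract; fun_prop

theorem rectRetract_mem {α β γ δ : ℝ} (hαβ : α ≤ β) (hγδ : γ ≤ δ) (p : ℝ × ℝ) :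
    rectRetract α β γ δ p ∈ Icc α β ×ˢ Icc γ δ :=
  ⟨⟨le_max_left _ _, max_le hαβ (min_le_left _ _)⟩, ⟨le_max_left _ _, max_le hγδ (min_le_left _ _)⟩⟩

theorem rectRetract_of_mem {α β γ δ : ℝ} {p : ℝ × ℝ} (hp : p ∈ Icc α β ×ˢ Icc γ δ) :
    rectRetract α β γ δ p = p := by
  obtain ⟨⟨h1, h2⟩, h3, h4⟩ := hp
  simp [rectRetract, h1, h2, h3, h4]

theorem exists_zero_of_boundary_signs {α β γ δ : ℝ} (hαβ : α ≤ β) (hγδ : γ ≤ δ)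
    {h : ℝ × ℝ → ℝ × ℝ} (hh : ContinuousOn h (Icc α β ×ˢ Icc γ δ))
    (hL : ∀ y ∈ Icc γ δ, (h (α, y)).1 < 0) (hR : ∀ y ∈ Icc γ δ, 0 < (h (β, y)).1)
    (hB : ∀ x ∈ Icc α β, 0 < (h (x, γ)).2) (hT : ∀ x ∈ Icc α β, (h (x, δ)).2 < 0) :
    ∃ p ∈ Icc α β ×ˢ Icc γ δ, h p = 0 := by
  by_contra! hne
  set g : ℝ × ℝ → ℂ := fun p => Complex.equivRealProdCLM.symm (h (rectRetract α β γ δ p))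
  have hg : Continuous g := Complex.equivRealProdCLM.symm.continuous.comp
    (hh.comp_continuous (continuous_rectRetract ..) (rectRetract_mem hαβ hγδ))
  have hg0 : ∀ p, g p ≠ 0 := fun p => by
    simpa [g] using hne _ (rectRetract_mem hαβ hγδ p)
  obtain ⟨L, hLc, hexp⟩ := exists_continuous_exp_eq hg hg0
  have hpolar : ∀ p ∈ Icc α β ×ˢ Icc γ δ,
      h p = (exp (L p).re * cos (L p).im, exp (L p).re * sin (L p).im) := by
    intro p hp
    rw [← Complex.exp_re, ← Complex.exp_im, hexp p]
    simp [g, rectRetract_of_mem hp]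
  have hα := left_mem_Icc.2 hαβ
  have hβ := right_mem_Icc.2 hαβ
  have hγ := left_mem_Icc.2 hγδ
  have hδ := right_mem_Icc.2 hγδ
  refine false_of_angle_boundary_signs hαβ hγδ (θ := fun p => (L p).im)
    (Complex.continuous_im.comp hLc).continuousOn (fun y hy => ?_) (fun y hy => ?_)
    (fun x hx => ?_) (fun x hx => ?_)
  · have := hL y hy
    rw [hpolar _ (mk_mem_prod hα hy)] at this
    exact neg_of_mul_neg_right this (exp_pos _).le
  · have := hR y hy
    rw [hpolar _ (mk_mem_prod hβ hy)] at this
    exact pos_of_mul_pos_right this (exp_pos _).le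
  · have := hB x hx
    rw [hpolar _ (mk_mem_prod hx hγ)] at this
    exact pos_of_mul_pos_right this (exp_pos _).le
  · have := hT x hx
    rw [hpolar _ (mk_mem_prod hx hδ)] at this
    exact neg_of_mul_neg_right this (exp_pos _).le

theorem exists_zero_of_boundary_signs_of_or {α β γ δ : ℝ} (hαβ : α ≤ β) (hγδ : γ ≤ δ)
    {h : ℝ × ℝ → ℝ × ℝ} (hh : ContinuousOn h (Icc α β ×ˢ Icc γ δ))
    (hLR : (∀ y ∈ Icc γ δ, (h (α, y)).1 < 0 ∧ 0 < (h (β, y)).1) ∨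
      (∀ y ∈ Icc γ δ, 0 < (h (α, y)).1 ∧ (h (β, y)).1 < 0))
    (hB : ∀ x ∈ Icc α β, 0 < (h (x, γ)).2) (hT : ∀ x ∈ Icc α β, (h (x, δ)).2 < 0) :
    ∃ p ∈ Icc α β ×ˢ Icc γ δ, h p = 0 := by
  rcases hLR with hLR | hLR
  · exact exists_zero_of_boundary_signs hαβ hγδ hh (fun y hy => (hLR y hy).1)
      (fun y hy => (hLR y hy).2) hB hT
  · obtain ⟨p, hp, hp0⟩ := exists_zero_of_boundary_signs hαβ hγδ
      (h := fun p => (-(h p).1, (h p).2)) (hh.fst.neg.prodMk hh.snd)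
      (fun y hy => neg_neg_of_pos (hLR y hy).1) (fun y hy => neg_pos_of_neg (hLR y hy).2) hB hT
    exact ⟨p, hp, by simpa [Prod.ext_iff] using hp0⟩

def MapsToPairOrSwap {α β : Type*} (g : α → β) (s₁ s₂ : Set α) (t₁ t₂ : Set β) : Prop :=
  (MapsTo g s₁ t₁ ∧ MapsTo g s₂ t₂) ∨ (MapsTo g s₁ t₂ ∧ MapsTo g s₂ t₁)

namespace MapsToPairOrSwap

variable {α β γ : Type*} {f : α → β} {g : β → γ} {s₁ s₂ : Set α} {t₁ t₂ : Set β}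
  {u₁ u₂ : Set γ}

theorem comp (hg : MapsToPairOrSwap g t₁ t₂ u₁ u₂) (hf : MapsToPairOrSwap f s₁ s₂ t₁ t₂) :
    MapsToPairOrSwap (g ∘ f) s₁ s₂ u₁ u₂ := by
  rcases hg with ⟨hg₁, hg₂⟩ | ⟨hg₁, hg₂⟩ <;> rcases hf with ⟨hf₁, hf₂⟩ | ⟨hf₁, hf₂⟩
  exacts [.inl ⟨hg₁.comp hf₁, hg₂.comp hf₂⟩, .inr ⟨hg₂.comp hf₁, hg₁.comp hf₂⟩,
    .inr ⟨hg₁.comp hf₁, hg₂.comp hf₂⟩, .inl ⟨hg₂.comp hf₁, hg₁.comp hf₂⟩]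

theorem union (hf : MapsToPairOrSwap f s₁ s₂ t₁ t₂) : MapsTo f (s₁ ∪ s₂) (t₁ ∪ t₂) := by
  rcases hf with ⟨h₁, h₂⟩ | ⟨h₁, h₂⟩
  · exact h₁.union_union h₂
  · exact union_comm t₂ t₁ ▸ h₁.union_union h₂

end MapsToPairOrSwap

namespace CoversH

variable {g : ℝ × ℝ → ℝ × ℝ} {a₀ b₀ a₁ b₁ r : ℝ}

theorem mapsToPairOrSwap (h : CoversH g a₀ b₀ a₁ b₁ r) :
    MapsToPairOrSwap g (LeftEdge a₀ r) (RightEdge b₀ r) (LeftSide a₁) (RightSide b₁) := by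
  simpa only [MapsToPairOrSwap, mapsTo_iff_image_subset] using h.2

theorem mem_of_notMem_sides (h : CoversH g a₀ b₀ a₁ b₁ r) {z : ℝ × ℝ}
    (hz : z ∈ HSet a₀ b₀ r) (hs : g z ∉ LeftSide a₁ ∪ RightSide b₁) :
    g z ∈ HSet a₁ b₁ r \ HorizBdry a₁ b₁ r := by
  obtain ⟨(hl | hin) | hr, hbd⟩ := h.1 (mem_image_of_mem g hz)
  · exact absurd (.inl hl) hs
  · exact ⟨hin, hbd⟩
  · exact absurd (.inr hr) hs

end CoversH

theorem notMem_sides_of_mem_Icc {a b : ℝ} {z : ℝ × ℝ} (hz : z.1 ∈ Icc a b) :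
    z ∉ LeftSide a ∪ RightSide b := by
  rintro (h | h)
  exacts [not_lt.2 hz.1 h.1, not_lt.2 hz.2 h.1]

theorem mem_interior_HSet {a b r : ℝ} {z : ℝ × ℝ} (hz : z ∈ HSet a b r)
    (he : z ∉ LeftEdge a r ∪ RightEdge b r) (hh : z ∉ HorizBdry a b r) :
    z ∈ interior (HSet a b r) := by
  obtain ⟨⟨h1, h2⟩, h3, h4⟩ := hz
  rw [HSet, interior_prod_eq, interior_Icc, interior_Icc]
  refine ⟨⟨lt_of_le_of_ne h1 ?_, lt_of_le_of_ne h2 ?_⟩, lt_of_le_of_ne h3 ?_, lt_of_le_of_ne h4 ?_⟩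
  · exact fun h => he (.inl ⟨h.symm, h3, h4⟩)
  · exact fun h => he (.inr ⟨h, h3, h4⟩)
  · exact fun h => hh ⟨⟨h1, h2⟩, .inl h.symm⟩
  · exact fun h => hh ⟨⟨h1, h2⟩, .inr h⟩

theorem rectRetract_fst_of_le {α β γ δ : ℝ} {p : ℝ × ℝ} (hp : p.1 ≤ α) :
    (rectRetract α β γ δ p).1 = α := by
  simp [rectRetract, hp]

theorem rectRetract_fst_of_ge {α β γ δ : ℝ} (hαβ : α ≤ β) {p : ℝ × ℝ} (hp : β ≤ p.1) :
    (rectRetract α β γ δ p).1 = β := by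
  simp [rectRetract, hp, hαβ]

theorem mapsToPairOrSwap_rectRetract_sides {a b r : ℝ} (hab : a ≤ b) (hr : 0 ≤ r) :
    MapsToPairOrSwap (rectRetract a b (-r) r) (LeftSide a) (RightSide b) (LeftEdge a r)
      (RightEdge b r) :=
  .inl ⟨fun z hz => ⟨rectRetract_fst_of_le (le_of_lt hz.1),
      (rectRetract_mem hab (by linarith) z).2⟩,
    fun z hz => ⟨rectRetract_fst_of_ge hab (le_of_lt hz.1),
      (rectRetract_mem hab (by linarith) z).2⟩⟩

theorem mapsToPairOrSwap_rectRetract_edges {a b r : ℝ} (hab : a ≤ b) (hr : 0 ≤ r) (R : ℝ) :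
    MapsToPairOrSwap (rectRetract a b (-r) r) (LeftEdge a R) (RightEdge b R) (LeftEdge a r)
      (RightEdge b r) :=
  .inl ⟨fun z hz => ⟨rectRetract_fst_of_le (le_of_eq hz.1),
      (rectRetract_mem hab (by linarith) z).2⟩,
    fun z hz => ⟨rectRetract_fst_of_ge hab (ge_of_eq hz.1),
      (rectRetract_mem hab (by linarith) z).2⟩⟩

section ClampedOrbit

variable (f : ℝ × ℝ → ℝ × ℝ) (a b : ℕ → ℝ) (r : ℝ)

def clampedOrbit : ℕ → ℝ × ℝ → ℝ × ℝ
  | 0 => rectRetract (a 0) (b 0) (-r) r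
  | k + 1 => rectRetract (a (k + 1)) (b (k + 1)) (-r) r ∘ f ∘ clampedOrbit k

variable {f a b r}

theorem continuous_clampedOrbit (hf : Continuous f) : ∀ k, Continuous (clampedOrbit f a b r k)
  | 0 => continuous_rectRetract ..
  | k + 1 => (continuous_rectRetract ..).comp (hf.comp (continuous_clampedOrbit hf k))

theorem clampedOrbit_zero_of_mem {p : ℝ × ℝ} (hp : p ∈ HSet (a 0) (b 0) r) :
    clampedOrbit f a b r 0 p = p :=
  rectRetract_of_mem hp

theorem clampedOrbit_mem (hab : ∀ k, a k ≤ b k) (hr : 0 ≤ r) (k : ℕ) (p : ℝ × ℝ) :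
    clampedOrbit f a b r k p ∈ HSet (a k) (b k) r := by
  cases k <;> exact rectRetract_mem (hab _) (by linarith) _

theorem mapsToPairOrSwap_clampedOrbit (hab : ∀ k, a k ≤ b k) (hr : 0 ≤ r)
    (hcov : ∀ k, CoversH f (a k) (b k) (a (k + 1)) (b (k + 1)) r)
    (R : ℝ) : ∀ k,
    MapsToPairOrSwap (clampedOrbit f a b r k) (LeftEdge (a 0) R) (RightEdge (b 0) R)
      (LeftEdge (a k) r) (RightEdge (b k) r)
  | 0 => mapsToPairOrSwap_rectRetract_edges (hab 0) hr R
  | k + 1 => (mapsToPairOrSwap_rectRetract_sides (hab (k + 1)) hr).comp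
      ((hcov k).mapsToPairOrSwap.comp (mapsToPairOrSwap_clampedOrbit hab hr hcov R k))

theorem clampedOrbit_mem_edges_of_le (hab : ∀ k, a k ≤ b k) (hr : 0 ≤ r)
    (hcov : ∀ k, CoversH f (a k) (b k) (a (k + 1)) (b (k + 1)) r)
    {j k : ℕ} {p : ℝ × ℝ}
    (hj : clampedOrbit f a b r j p ∈ LeftEdge (a j) r ∪ RightEdge (b j) r) (hjk : j ≤ k) :
    clampedOrbit f a b r k p ∈ LeftEdge (a k) r ∪ RightEdge (b k) r := by
  induction k, hjk using Nat.le_induction with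
  | base => exact hj
  | succ k _ ih =>
    exact (mapsToPairOrSwap_rectRetract_sides (hab (k + 1)) hr).union
      ((hcov k).mapsToPairOrSwap.union ih)

theorem clampedOrbit_notMem_edges (hab : ∀ k, a k ≤ b k) (hr : 0 ≤ r)
    (hcov : ∀ k, CoversH f (a k) (b k) (a (k + 1)) (b (k + 1)) r)
    {m : ℕ} {p : ℝ × ℝ}
    (hp : f (clampedOrbit f a b r m p) ∉ LeftSide (a (m + 1)) ∪ RightSide (b (m + 1))) :
    ∀ k ≤ m, clampedOrbit f a b r k p ∉ LeftEdge (a k) r ∪ RightEdge (b k) r := fun _ hk h =>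
  hp ((hcov m).mapsToPairOrSwap.union (clampedOrbit_mem_edges_of_le hab hr hcov h hk))

theorem clampedOrbit_succ_eq (hab : ∀ k, a k ≤ b k) (hr : 0 ≤ r)
    (hcov : ∀ k, CoversH f (a k) (b k) (a (k + 1)) (b (k + 1)) r)
    {k : ℕ} {p : ℝ × ℝ}
    (h : clampedOrbit f a b r (k + 1) p ∉ LeftEdge (a (k + 1)) r ∪ RightEdge (b (k + 1)) r) :
    clampedOrbit f a b r (k + 1) p = f (clampedOrbit f a b r k p) ∧
      f (clampedOrbit f a b r k p) ∉ HorizBdry (a (k + 1)) (b (k + 1)) r := by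
  have hside : f (clampedOrbit f a b r k p) ∉ LeftSide (a (k + 1)) ∪ RightSide (b (k + 1)) :=
    fun hs => h ((mapsToPairOrSwap_rectRetract_sides (hab (k + 1)) hr).union hs)
  obtain ⟨hin, hbd⟩ := (hcov k).mem_of_notMem_sides (clampedOrbit_mem hab hr k p) hside
  exact ⟨rectRetract_of_mem hin, hbd⟩

theorem iterate_eq_clampedOrbit (hab : ∀ k, a k ≤ b k) (hr : 0 ≤ r)
    (hcov : ∀ k, CoversH f (a k) (b k) (a (k + 1)) (b (k + 1)) r)
    {m : ℕ} {p : ℝ × ℝ} (hp : p ∈ HSet (a 0) (b 0) r)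
    (hedges : ∀ k ≤ m, clampedOrbit f a b r k p ∉ LeftEdge (a k) r ∪ RightEdge (b k) r) :
    ∀ k ≤ m, f^[k] p = clampedOrbit f a b r k p
  | 0, _ => (clampedOrbit_zero_of_mem hp).symm
  | k + 1, hk => by
    rw [Function.iterate_succ_apply', iterate_eq_clampedOrbit hab hr hcov hp hedges k (by omega),
      (clampedOrbit_succ_eq hab hr hcov (hedges (k + 1) hk)).1]

theorem exists_fixed_point_clampedOrbit (hf : Continuous f) (hab : ∀ k, a k ≤ b k) (hr : 0 < r)
    (hcov : ∀ k, CoversH f (a k) (b k) (a (k + 1)) (b (k + 1)) r) (m : ℕ)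
    (ha : a (m + 1) = a 0) (hb : b (m + 1) = b 0) :
    ∃ p ∈ HSet (a 0) (b 0) r \ HorizBdry (a 0) (b 0) r, f (clampedOrbit f a b r m p) = p := by
  have hlast : CoversH f (a m) (b m) (a 0) (b 0) r := ha ▸ hb ▸ hcov m
  set Q := clampedOrbit f a b r m
  have hQ : Continuous Q := continuous_clampedOrbit hf m
  have hρ := continuous_rectRetract (a 0) (b 0) (-r) r
  have hρy : ∀ q, (rectRetract (a 0) (b 0) (-r) r q).2 ∈ Icc (-r) r :=
    fun q => (rectRetract_mem (hab 0) (by linarith) q).2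
  have hsides : (∀ y ∈ Icc (-(2 * r)) (2 * r), (f (Q (a 0, y))).1 - a 0 < 0 ∧
        0 < (f (Q (b 0, y))).1 - b 0) ∨
      (∀ y ∈ Icc (-(2 * r)) (2 * r), 0 < (f (Q (a 0, y))).1 - a 0 ∧
        (f (Q (b 0, y))).1 - b 0 < 0) := by
    rcases hlast.mapsToPairOrSwap.comp (mapsToPairOrSwap_clampedOrbit hab hr.le hcov (2 * r) m)
      with ⟨hL, hR⟩ | ⟨hL, hR⟩
    · exact .inl fun y hy => ⟨sub_neg.2 (hL (mk_mem_prod rfl hy)).1,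
        sub_pos.2 (hR (mk_mem_prod rfl hy)).1⟩
    · exact .inr fun y hy => ⟨sub_pos.2 ((hab 0).trans_lt (hL (mk_mem_prod rfl hy)).1),
        sub_neg.2 ((hR (mk_mem_prod rfl hy)).1.trans_le (hab 0))⟩
  -- Poincaré–Miranda on the taller rectangle `[a 0, b 0] × [-2r, 2r]`, where clamping the second
  -- coordinate to `[-r, r]` makes the signs on the horizontal sides strict.
  obtain ⟨p, ⟨hpx, -⟩, hp0⟩ := exists_zero_of_boundary_signs_of_or (hab 0)
    (by linarith : -(2 * r) ≤ 2 * r)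
    (h := fun p => ((f (Q p)).1 - p.1, (rectRetract (a 0) (b 0) (-r) r (f (Q p))).2 - p.2))
    (by fun_prop) hsides (fun x _ => by dsimp only; linarith [(hρy (f (Q (x, -(2 * r))))).1])
    (fun x _ => by dsimp only; linarith [(hρy (f (Q (x, 2 * r)))).2])
  simp only [Prod.ext_iff, Prod.fst_zero, Prod.snd_zero, sub_eq_zero] at hp0
  have hin := hlast.mem_of_notMem_sides (clampedOrbit_mem hab hr.le m p)
    (notMem_sides_of_mem_Icc (hp0.1 ▸ hpx))
  have hfix : f (Q p) = p := Prod.ext hp0.1 (by rw [← hp0.2, rectRetract_of_mem hin.1])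
  exact ⟨p, hfix ▸ hin, hfix⟩

end ClampedOrbit

theorem exists_periodic_orbit_of_coversH {f : ℝ × ℝ → ℝ × ℝ} (hf : Continuous f)
    {a b : ℕ → ℝ} {r : ℝ} (hab : ∀ k, a k ≤ b k) (hr : 0 < r)
    (hcov : ∀ k, CoversH f (a k) (b k) (a (k + 1)) (b (k + 1)) r) (m : ℕ)
    (ha : a (m + 1) = a 0) (hb : b (m + 1) = b 0) :
    ∃ x, f^[m + 1] x = x ∧ ∀ k ≤ m, f^[k] x ∈ interior (HSet (a k) (b k) r) := by
  obtain ⟨p, ⟨hpN, hpB⟩, hfix⟩ := exists_fixed_point_clampedOrbit hf hab hr hcov m ha hb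
  have hedges := clampedOrbit_notMem_edges hab hr.le hcov
    (by rw [hfix, ha, hb]; exact notMem_sides_of_mem_Icc hpN.1)
  have horbit := iterate_eq_clampedOrbit hab hr.le hcov hpN hedges
  refine ⟨p, by rw [Function.iterate_succ_apply', horbit m le_rfl, hfix], fun k hk => ?_⟩
  rw [horbit k hk]
  cases k with
  | zero =>
    have h0 := hedges 0 hk
    rw [clampedOrbit_zero_of_mem hpN] at h0 ⊢
    exact mem_interior_HSet hpN h0 hpB
  | succ k =>
    obtain ⟨heq, hbd⟩ := clampedOrbit_succ_eq hab hr.le hcov (hedges _ hk)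
    exact mem_interior_HSet (clampedOrbit_mem hab hr.le _ p) (hedges _ hk) (heq ▸ hbd)

theorem stmt_8_general (f : ℝ × ℝ → ℝ × ℝ) (hf : Continuous f)
    (a b : Fin 2 → ℝ) (r : ℝ) (hr : 0 < r) (hab : ∀ i, a i ≤ b i)
    (hcov : ∀ i j : Fin 2, CoversH f (a i) (b i) (a j) (b j) r) :
    ∀ n : ℕ, ∀ hn : 1 ≤ n, ∀ seq : Fin n → Fin 2,
      ∃ x ∈ interior (HSet (a (seq ⟨0, hn⟩)) (b (seq ⟨0, hn⟩)) r),
        f^[n] x = x ∧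
        ∀ j : Fin n, f^[(j : ℕ)] x ∈ interior (HSet (a (seq j)) (b (seq j)) r) := by
  intro n hn seq
  obtain ⟨m, rfl⟩ := Nat.exists_eq_add_of_le' hn
  set I : ℕ → Fin 2 := fun k => seq ⟨k % (m + 1), Nat.mod_lt _ m.succ_pos⟩
  have hI : ∀ j : Fin (m + 1), I j = seq j := fun j => congrArg seq (Fin.ext (Nat.mod_eq_of_lt j.2))
  have hI0 : I (m + 1) = I 0 := by simp [I]
  obtain ⟨x, hfix, horbit⟩ := exists_periodic_orbit_of_coversH hf (fun k => hab (I k)) hr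
    (fun k => hcov (I k) (I (k + 1))) m (by rw [hI0]) (by rw [hI0])
  refine ⟨x, hI ⟨0, hn⟩ ▸ horbit 0 m.zero_le, hfix, fun j => ?_⟩
  rw [← hI j]
  exact horbit j (Nat.lt_succ_iff.1 j.2)

/-- Two-dimensional topological horseshoe: two disjoint h-sets, each horizontally
f-covering both, yield orbits following every finite itinerary. -/
theorem stmt_8 (f : ℝ × ℝ → ℝ × ℝ) (hf : Continuous f)
    (a b : Fin 2 → ℝ) (r : ℝ) (hr : 0 < r) (hab : ∀ i, a i ≤ b i)
    (hdisj : Disjoint (HSet (a 0) (b 0) r) (HSet (a 1) (b 1) r))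
    (hcov : ∀ i j : Fin 2, CoversH f (a i) (b i) (a j) (b j) r) :
    ∀ n : ℕ, ∀ hn : 1 ≤ n, ∀ seq : Fin n → Fin 2,
      ∃ x ∈ interior (HSet (a (seq ⟨0, hn⟩)) (b (seq ⟨0, hn⟩)) r),
        f^[n] x = x ∧
        ∀ j : Fin n, f^[(j : ℕ)] x ∈ interior (HSet (a (seq j)) (b (seq j)) r) :=
  stmt_8_general f hf a b r hr hab hcov
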